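/- Let k be a field of characteristic zero, let Ω be a k-vector space of dimension 3, let ⋆ ∈ Ω, and let Λ be a subspace of (Ω⊗Ω) ⊕ (Ω⊗Ω). There exists a unit action (α, β) for ⋆ with α ≠ β that is coherent with Λ if and only if there exists a basis (≺, ≻, ∘) of Ω with ⋆ = ≺ + ≻ + ∘ such that Λ is contained in the span of the following elements of (Ω⊗Ω) ⊕ (Ω⊗Ω): (≺⊗≺, ≺⊗⋆), (≻⊗≺, ≻⊗≺), (⋆⊗≻, ≻⊗≻), (≻⊗∘, ≻⊗∘), (≺⊗∘, ∘⊗≻), (∘⊗≺, ∘⊗≺), (∘⊗∘, 0), and (0, ∘⊗∘). -/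

import Mathlib

open TensorProduct

section Defs

variable {k : Type*} [Field k]

noncomputable def contrL {Ω : Type*} [AddCommGroup Ω] [Module k Ω]
    (φ : Module.Dual k Ω) : Ω ⊗[k] Ω →ₗ[k] Ω :=
  (TensorProduct.lid k Ω).toLinearMap ∘ₗ TensorProduct.map φ LinearMap.id

noncomputable def contrR {Ω : Type*} [AddCommGroup Ω] [Module k Ω]
    (φ : Module.Dual k Ω) : Ω ⊗[k] Ω →ₗ[k] Ω :=
  (TensorProduct.rid k Ω).toLinearMap ∘ₗ TensorProduct.map LinearMap.id φ

noncomputable def contrB {Ω₁ Ω₂ : Type*} [AddCommGroup Ω₁] [Module k Ω₁]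
    [AddCommGroup Ω₂] [Module k Ω₂]
    (φ : Module.Dual k Ω₁) (ψ : Module.Dual k Ω₂) : Ω₁ ⊗[k] Ω₂ →ₗ[k] k :=
  (TensorProduct.lid k k).toLinearMap ∘ₗ TensorProduct.map φ ψ

/-- The coherence equations (C1)-(C5) for a pair `uv ∈ (Ω⊗Ω) × (Ω⊗Ω)`. -/
def CoherenceEqs {Ω : Type*} [AddCommGroup Ω] [Module k Ω]
    (α β : Module.Dual k Ω) (star : Ω)
    (uv : (Ω ⊗[k] Ω) × (Ω ⊗[k] Ω)) : Prop :=
  contrL β uv.1 = contrL β uv.2 ∧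
  contrL α uv.1 = contrR β uv.2 ∧
  contrR α uv.1 = contrR α uv.2 ∧
  contrR β uv.1 = contrB β β uv.2 • star ∧
  contrB α α uv.1 • star = contrL α uv.2

/-- The compatibility equations (C1)-(C3). -/
def CompatEqs {Ω : Type*} [AddCommGroup Ω] [Module k Ω]
    (α β : Module.Dual k Ω)
    (uv : (Ω ⊗[k] Ω) × (Ω ⊗[k] Ω)) : Prop :=
  contrL β uv.1 = contrL β uv.2 ∧
  contrL α uv.1 = contrR β uv.2 ∧
  contrR α uv.1 = contrR α uv.2

def IsCoherent {Ω : Type*} [AddCommGroup Ω] [Module k Ω]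
    (α β : Module.Dual k Ω) (star : Ω)
    (Λ : Submodule k ((Ω ⊗[k] Ω) × (Ω ⊗[k] Ω))) : Prop :=
  ∀ uv ∈ Λ, CoherenceEqs α β star uv

def IsCompatible {Ω : Type*} [AddCommGroup Ω] [Module k Ω]
    (α β : Module.Dual k Ω)
    (Λ : Submodule k ((Ω ⊗[k] Ω) × (Ω ⊗[k] Ω))) : Prop :=
  ∀ uv ∈ Λ, CompatEqs α β uv

end Defs
section Aux

variable {k : Type*} [Field k] {Ω : Type*} [AddCommGroup Ω] [Module k Ω]

@[simp] lemma contrL_tmul (φ : Module.Dual k Ω) (x y : Ω) :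
    contrL φ (x ⊗ₜ[k] y) = φ x • y := by simp [contrL]

@[simp] lemma contrR_tmul (φ : Module.Dual k Ω) (x y : Ω) :
    contrR φ (x ⊗ₜ[k] y) = φ y • x := by simp [contrR]

@[simp] lemma contrB_tmul (φ ψ : Module.Dual k Ω) (x y : Ω) :
    contrB φ ψ (x ⊗ₜ[k] y) = φ x * ψ y := by simp [contrB, smul_eq_mul]

lemma coord_contrL (φ ψ : Module.Dual k Ω) (u : Ω ⊗[k] Ω) :
    ψ (contrL φ u) = contrB φ ψ u := by
  induction u using TensorProduct.induction_on with
  | zero => simp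
  | tmul x y => simp
  | add x y hx hy => simp [hx, hy]

lemma coord_contrR (φ ψ : Module.Dual k Ω) (u : Ω ⊗[k] Ω) :
    ψ (contrR φ u) = contrB ψ φ u := by
  induction u using TensorProduct.induction_on with
  | zero => simp
  | tmul x y => simp [mul_comm]
  | add x y hx hy => simp [hx, hy]

@[simp] lemma coord_basis (b : Module.Basis (Fin 3) k Ω) (i j : Fin 3) :
    b.coord i (b j) = if j = i then 1 else 0 := by
  simp [Module.Basis.coord_apply, Module.Basis.repr_self, Finsupp.single_apply]

lemma tensor_expand (b : Module.Basis (Fin 3) k Ω) (u : Ω ⊗[k] Ω) :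
    u = ∑ i : Fin 3, ∑ j : Fin 3, contrB (b.coord i) (b.coord j) u • (b i ⊗ₜ[k] b j) := by
  have h : (LinearMap.id : Ω ⊗[k] Ω →ₗ[k] Ω ⊗[k] Ω) =
      ∑ i : Fin 3, ∑ j : Fin 3,
        LinearMap.toSpanSingleton k _ (b i ⊗ₜ[k] b j) ∘ₗ contrB (b.coord i) (b.coord j) := by
    apply (Module.Basis.tensorProduct b b).ext
    rintro ⟨p, q⟩
    simp only [Module.Basis.tensorProduct_apply, LinearMap.id_apply, LinearMap.coe_sum,
      Finset.sum_apply, LinearMap.comp_apply, LinearMap.toSpanSingleton_apply,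
      contrB_tmul, coord_basis]
    fin_cases p <;> fin_cases q <;> simp [Fin.sum_univ_three]
  conv_lhs => rw [← LinearMap.id_apply (R := k) u, h]
  simp only [LinearMap.coe_sum, Finset.sum_apply, LinearMap.comp_apply,
    LinearMap.toSpanSingleton_apply]

end Aux
section Aux2

variable {k : Type*} [Field k] {Ω : Type*} [AddCommGroup Ω] [Module k Ω]

noncomputable def solS (α β : Module.Dual k Ω) (star : Ω) :
    Submodule k ((Ω ⊗[k] Ω) × (Ω ⊗[k] Ω)) :=
  LinearMap.ker (contrL β ∘ₗ LinearMap.fst k _ _ - contrL β ∘ₗ LinearMap.snd k _ _) ⊓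
  LinearMap.ker (contrL α ∘ₗ LinearMap.fst k _ _ - contrR β ∘ₗ LinearMap.snd k _ _) ⊓
  LinearMap.ker (contrR α ∘ₗ LinearMap.fst k _ _ - contrR α ∘ₗ LinearMap.snd k _ _) ⊓
  LinearMap.ker (contrR β ∘ₗ LinearMap.fst k _ _ -
    LinearMap.toSpanSingleton k Ω star ∘ₗ contrB β β ∘ₗ LinearMap.snd k _ _) ⊓
  LinearMap.ker (LinearMap.toSpanSingleton k Ω star ∘ₗ contrB α α ∘ₗ LinearMap.fst k _ _ -
    contrL α ∘ₗ LinearMap.snd k _ _)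

lemma mem_solS_iff (α β : Module.Dual k Ω) (star : Ω)
    (uv : (Ω ⊗[k] Ω) × (Ω ⊗[k] Ω)) :
    uv ∈ solS α β star ↔ CoherenceEqs α β star uv := by
  simp [solS, CoherenceEqs, Submodule.mem_inf, LinearMap.mem_ker, sub_eq_zero,
    LinearMap.toSpanSingleton_apply, and_assoc]

def genSet (b : Module.Basis (Fin 3) k Ω) (star : Ω) : Set ((Ω ⊗[k] Ω) × (Ω ⊗[k] Ω)) :=
  {(b 0 ⊗ₜ[k] b 0, b 0 ⊗ₜ[k] star),
   (b 1 ⊗ₜ[k] b 0, b 1 ⊗ₜ[k] b 0),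
   (star ⊗ₜ[k] b 1, b 1 ⊗ₜ[k] b 1),
   (b 1 ⊗ₜ[k] b 2, b 1 ⊗ₜ[k] b 2),
   (b 0 ⊗ₜ[k] b 2, b 2 ⊗ₜ[k] b 1),
   (b 2 ⊗ₜ[k] b 0, b 2 ⊗ₜ[k] b 0),
   (b 2 ⊗ₜ[k] b 2, 0),
   (0, b 2 ⊗ₜ[k] b 2)}

lemma span_le_solS (b : Module.Basis (Fin 3) k Ω) (star : Ω)
    (hstar : star = b 0 + b 1 + b 2) :
    Submodule.span k (genSet b star) ≤ solS (b.coord 0) (b.coord 1) star := by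
  rw [Submodule.span_le]
  rintro uv (rfl | rfl | rfl | rfl | rfl | rfl | rfl | rfl) <;>
    rw [SetLike.mem_coe, mem_solS_iff] <;>
    refine ⟨?_, ?_, ?_, ?_, ?_⟩ <;>
    simp [hstar, TensorProduct.tmul_add, TensorProduct.add_tmul, TensorProduct.smul_tmul]

end Aux2
section Aux3

variable {k : Type*} [Field k] {Ω : Type*} [AddCommGroup Ω] [Module k Ω]

lemma mem_span_of_coherent (b : Module.Basis (Fin 3) k Ω) (star : Ω)
    (hstar : star = b 0 + b 1 + b 2) (uv : (Ω ⊗[k] Ω) × (Ω ⊗[k] Ω))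
    (h : CoherenceEqs (b.coord 0) (b.coord 1) star uv) :
    uv ∈ Submodule.span k (genSet b star) := by
  obtain ⟨u, v⟩ := uv
  obtain ⟨h1, h2, h3, h4, h5⟩ := h
  have hstar_coord : ∀ i : Fin 3, b.coord i star = 1 := by
    intro i; fin_cases i <;> simp [hstar]
  have hc1 : ∀ j, contrB (b.coord 1) (b.coord j) u = contrB (b.coord 1) (b.coord j) v :=
    fun j => by
      have := congrArg (b.coord j) h1; rwa [coord_contrL, coord_contrL] at this
  have hc2 : ∀ j, contrB (b.coord 0) (b.coord j) u = contrB (b.coord j) (b.coord 1) v :=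
    fun j => by
      have := congrArg (b.coord j) h2; rwa [coord_contrL, coord_contrR] at this
  have hc3 : ∀ i, contrB (b.coord i) (b.coord 0) u = contrB (b.coord i) (b.coord 0) v :=
    fun i => by
      have := congrArg (b.coord i) h3; rwa [coord_contrR, coord_contrR] at this
  have hc4 : ∀ i, contrB (b.coord i) (b.coord 1) u = contrB (b.coord 1) (b.coord 1) v :=
    fun i => by
      have := congrArg (b.coord i) h4
      rwa [coord_contrR, map_smul, smul_eq_mul, hstar_coord, mul_one] at this
  have hc5 : ∀ j, contrB (b.coord 0) (b.coord j) v = contrB (b.coord 0) (b.coord 0) u :=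
    fun j => by
      have := congrArg (b.coord j) h5
      rw [coord_contrL, map_smul, smul_eq_mul, hstar_coord, mul_one] at this
      exact this.symm
  have e01 : contrB (b.coord 0) (b.coord 1) u = contrB (b.coord 1) (b.coord 1) u :=
    (hc4 0).trans (hc4 1).symm
  have e21 : contrB (b.coord 2) (b.coord 1) u = contrB (b.coord 1) (b.coord 1) u :=
    (hc4 2).trans (hc4 1).symm
  have hu : u = contrB (b.coord 0) (b.coord 0) u • (b 0 ⊗ₜ[k] b 0) +
      contrB (b.coord 1) (b.coord 0) u • (b 1 ⊗ₜ[k] b 0) +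
      contrB (b.coord 1) (b.coord 1) u • (star ⊗ₜ[k] b 1) +
      contrB (b.coord 1) (b.coord 2) u • (b 1 ⊗ₜ[k] b 2) +
      contrB (b.coord 0) (b.coord 2) u • (b 0 ⊗ₜ[k] b 2) +
      contrB (b.coord 2) (b.coord 0) u • (b 2 ⊗ₜ[k] b 0) +
      contrB (b.coord 2) (b.coord 2) u • (b 2 ⊗ₜ[k] b 2) := by
    conv_lhs => rw [tensor_expand b u]
    simp only [Fin.sum_univ_three]
    rw [e01, e21, hstar]
    simp only [TensorProduct.add_tmul]
    module
  have hv : v = contrB (b.coord 0) (b.coord 0) u • (b 0 ⊗ₜ[k] star) +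
      contrB (b.coord 1) (b.coord 0) u • (b 1 ⊗ₜ[k] b 0) +
      contrB (b.coord 1) (b.coord 1) u • (b 1 ⊗ₜ[k] b 1) +
      contrB (b.coord 1) (b.coord 2) u • (b 1 ⊗ₜ[k] b 2) +
      contrB (b.coord 0) (b.coord 2) u • (b 2 ⊗ₜ[k] b 1) +
      contrB (b.coord 2) (b.coord 0) u • (b 2 ⊗ₜ[k] b 0) +
      contrB (b.coord 2) (b.coord 2) v • (b 2 ⊗ₜ[k] b 2) := by
    conv_lhs => rw [tensor_expand b v]
    simp only [Fin.sum_univ_three]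
    rw [hc5 0, hc5 1, hc5 2, ← hc1 0, ← hc1 1, ← hc1 2, ← hc3 2, ← hc2 2, hstar]
    simp only [TensorProduct.tmul_add]
    module
  have key : (u, v) =
      contrB (b.coord 0) (b.coord 0) u • ((b 0 ⊗ₜ[k] b 0, b 0 ⊗ₜ[k] star) :
        (Ω ⊗[k] Ω) × (Ω ⊗[k] Ω)) +
      contrB (b.coord 1) (b.coord 0) u • (b 1 ⊗ₜ[k] b 0, b 1 ⊗ₜ[k] b 0) +
      contrB (b.coord 1) (b.coord 1) u • (star ⊗ₜ[k] b 1, b 1 ⊗ₜ[k] b 1) +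
      contrB (b.coord 1) (b.coord 2) u • (b 1 ⊗ₜ[k] b 2, b 1 ⊗ₜ[k] b 2) +
      contrB (b.coord 0) (b.coord 2) u • (b 0 ⊗ₜ[k] b 2, b 2 ⊗ₜ[k] b 1) +
      contrB (b.coord 2) (b.coord 0) u • (b 2 ⊗ₜ[k] b 0, b 2 ⊗ₜ[k] b 0) +
      contrB (b.coord 2) (b.coord 2) u • (b 2 ⊗ₜ[k] b 2, 0) +
      contrB (b.coord 2) (b.coord 2) v • ((0 : Ω ⊗[k] Ω), b 2 ⊗ₜ[k] b 2) := by
    refine Prod.ext ?_ ?_ <;>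
      simp only [Prod.fst_add, Prod.snd_add, Prod.smul_fst, Prod.smul_snd, smul_zero,
        add_zero, zero_add]
    · exact hu
    · exact hv
  rw [key]
  refine add_mem (add_mem (add_mem (add_mem (add_mem (add_mem (add_mem
    (Submodule.smul_mem _ _ (Submodule.subset_span (by simp [genSet])))
    (Submodule.smul_mem _ _ (Submodule.subset_span (by simp [genSet]))))
    (Submodule.smul_mem _ _ (Submodule.subset_span (by simp [genSet]))))
    (Submodule.smul_mem _ _ (Submodule.subset_span (by simp [genSet]))))
    (Submodule.smul_mem _ _ (Submodule.subset_span (by simp [genSet]))))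
    (Submodule.smul_mem _ _ (Submodule.subset_span (by simp [genSet]))))
    (Submodule.smul_mem _ _ (Submodule.subset_span (by simp [genSet]))))
    (Submodule.smul_mem _ _ (Submodule.subset_span (by simp [genSet])))

end Aux3
section Aux4

variable {k : Type*} [Field k] {Ω : Type*} [AddCommGroup Ω] [Module k Ω]
  [FiniteDimensional k Ω]

lemma exists_basis_of_unit_action (hdim : Module.finrank k Ω = 3)
    (star : Ω) (α β : Module.Dual k Ω)
    (hα : α star = 1) (hβ : β star = 1) (hne : α ≠ β) :
    ∃ b : Module.Basis (Fin 3) k Ω, star = b 0 + b 1 + b 2 ∧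
      α = b.coord 0 ∧ β = b.coord 1 := by
  classical
  obtain ⟨w, hw⟩ : ∃ w, α w ≠ β w := by
    by_contra hcon
    push_neg at hcon
    exact hne (LinearMap.ext hcon)
  have hd : α w - β w ≠ 0 := sub_ne_zero.mpr hw
  set x : Ω := (α w - β w)⁻¹ • (w - β w • star) with hxdef
  set y : Ω := (-(α w - β w))⁻¹ • (w - α w • star) with hydef
  have hαx : α x = 1 := by
    rw [hxdef, map_smul, map_sub, map_smul, hα, smul_eq_mul, smul_eq_mul, mul_one]
    exact inv_mul_cancel₀ hd
  have hβx : β x = 0 := by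
    simp [hxdef, hβ, smul_eq_mul]
  have hαy : α y = 0 := by
    simp [hydef, hα, smul_eq_mul]
  have hβy : β y = 1 := by
    rw [hydef, map_smul, map_sub, map_smul, hβ, smul_eq_mul, smul_eq_mul, mul_one, neg_sub]
    exact inv_mul_cancel₀ (sub_ne_zero.mpr (Ne.symm hw))
  -- a nonzero element of the common kernel
  obtain ⟨z, hzker, hz0⟩ : ∃ z, z ∈ LinearMap.ker (α.prod β) ∧ z ≠ 0 := by
    have h1 : Module.finrank k (LinearMap.range (α.prod β)) ≤ 2 := by
      have := Submodule.finrank_le (LinearMap.range (α.prod β))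
      simpa using this
    have h2 := LinearMap.finrank_range_add_finrank_ker (α.prod β)
    rw [hdim] at h2
    have h3 : 0 < Module.finrank k (LinearMap.ker (α.prod β)) := by omega
    have h4 : LinearMap.ker (α.prod β) ≠ ⊥ := by
      intro hbot
      rw [hbot] at h3
      simp at h3
    obtain ⟨z, hz, hz0⟩ := Submodule.ne_bot_iff _ |>.mp h4
    exact ⟨z, hz, hz0⟩
  have hαz : α z = 0 := by
    have := LinearMap.mem_ker.mp hzker
    simpa [LinearMap.prod_apply, Prod.ext_iff] using congrArg Prod.fst this
  have hβz : β z = 0 := by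
    have := LinearMap.mem_ker.mp hzker
    simpa [LinearMap.prod_apply, Prod.ext_iff] using congrArg Prod.snd this
  set x' : Ω := if star - x - y = 0 then x + z else x with hx'def
  have hαx' : α x' = 1 := by
    rw [hx'def]; split <;> simp [hαx, hαz]
  have hβx' : β x' = 0 := by
    rw [hx'def]; split <;> simp [hβx, hβz]
  set c : Ω := star - x' - y with hcdef
  have hc0 : c ≠ 0 := by
    rw [hcdef, hx'def]
    split
    · rename_i hsz
      intro hcon
      apply hz0
      have : star - (x + z) - y = star - x - y - z := by abel
      rw [this, hsz, zero_sub, neg_eq_zero] at hcon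
      exact hcon
    · assumption
  have hαc : α c = 0 := by simp [hcdef, hα, hαx', hαy]
  have hβc : β c = 0 := by simp [hcdef, hβ, hβx', hβy]
  have hli : LinearIndependent k ![x', y, c] := by
    rw [Fintype.linearIndependent_iff]
    intro g hg
    rw [Fin.sum_univ_three] at hg
    simp only [Matrix.cons_val_zero, Matrix.cons_val_one, Matrix.head_cons,
      Matrix.cons_val_two, Matrix.tail_cons] at hg
    have hg0 : g 0 = 0 := by
      have := congrArg α hg
      simpa [hαx', hαy, hαc] using this
    have hg1 : g 1 = 0 := by
      have := congrArg β hg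
      simpa [hβx', hβy, hβc] using this
    have hg2 : g 2 = 0 := by
      rw [hg0, hg1] at hg
      simp only [zero_smul, zero_add, add_zero, zero_add] at hg
      rcases smul_eq_zero.mp hg with h | h
      · exact h
      · exact absurd h hc0
    intro i; fin_cases i <;> assumption
  let b : Module.Basis (Fin 3) k Ω :=
    basisOfLinearIndependentOfCardEqFinrank hli (by simp [hdim])
  have hb : ⇑b = ![x', y, c] := coe_basisOfLinearIndependentOfCardEqFinrank hli _
  have hb0 : b 0 = x' := by rw [hb]; rfl
  have hb1 : b 1 = y := by rw [hb]; rfl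
  have hb2 : b 2 = c := by rw [hb]; rfl
  refine ⟨b, ?_, ?_, ?_⟩
  · rw [hb0, hb1, hb2, hcdef]; abel
  · refine b.ext fun i => ?_
    rw [coord_basis]
    fin_cases i <;> simp [hb, hαx', hαy, hαc]
  · refine b.ext fun i => ?_
    rw [coord_basis]
    fin_cases i <;> simp [hb, hβx', hβy, hβc]

end Aux4
/-- Corollary: dimension-3 case, coherent unit actions with α ≠ β. -/
theorem dim_three_neq_coherent_classification
    {k : Type*} [Field k] [CharZero k]
    {Ω : Type*} [AddCommGroup Ω] [Module k Ω] [FiniteDimensional k Ω]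
    (hdim : Module.finrank k Ω = 3)
    (star : Ω) (Λ : Submodule k ((Ω ⊗[k] Ω) × (Ω ⊗[k] Ω))) :
    (∃ α β : Module.Dual k Ω,
        α star = 1 ∧ β star = 1 ∧ α ≠ β ∧ IsCoherent α β star Λ) ↔
    (∃ b : Module.Basis (Fin 3) k Ω, star = b 0 + b 1 + b 2 ∧
      Λ ≤ Submodule.span k
        ({(b 0 ⊗ₜ[k] b 0, b 0 ⊗ₜ[k] star),
          (b 1 ⊗ₜ[k] b 0, b 1 ⊗ₜ[k] b 0),
          (star ⊗ₜ[k] b 1, b 1 ⊗ₜ[k] b 1),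
          (b 1 ⊗ₜ[k] b 2, b 1 ⊗ₜ[k] b 2),
          (b 0 ⊗ₜ[k] b 2, b 2 ⊗ₜ[k] b 1),
          (b 2 ⊗ₜ[k] b 0, b 2 ⊗ₜ[k] b 0),
          (b 2 ⊗ₜ[k] b 2, 0),
          (0, b 2 ⊗ₜ[k] b 2)} :
          Set ((Ω ⊗[k] Ω) × (Ω ⊗[k] Ω)))) := by

  constructor
  · rintro ⟨α, β, hα, hβ, hne, hcoh⟩
    obtain ⟨b, hstar, hαe, hβe⟩ := exists_basis_of_unit_action hdim star α β hα hβ hne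
    refine ⟨b, hstar, ?_⟩
    intro uv hm
    have h := hcoh uv hm
    rw [hαe, hβe] at h
    exact mem_span_of_coherent b star hstar uv h
  · rintro ⟨b, hstar, hle⟩
    refine ⟨b.coord 0, b.coord 1, ?_, ?_, ?_, ?_⟩
    · simp [hstar]
    · simp [hstar]
    · intro h
      have := congrArg (fun f : Module.Dual k Ω => f (b 0)) h
      simp at this
    · intro uv hm
      exact (mem_solS_iff _ _ _ _).mp (span_le_solS b star hstar (hle hm))
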